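/- For any POVM M = {M_x} on ℂ^d with at most k outcomes, the trace norm of its measurement information channel satisfies ‖H_M‖₁ = Σ_x Tr[M_x²]/Tr[M_x] ≤ min{k, d}. -/

import Mathlib

open Matrix
open scoped ComplexOrder

/-- Column-stacking vectorization: `vec(M) (j,i) = M i j`. -/
def vec {d : ℕ} (M : Matrix (Fin d) (Fin d) ℂ) : Fin d × Fin d → ℂ :=
  fun p => M p.2 p.1

/-- Matrix representation of the measurement information channel of a POVM `{M_x}`;
its trace norm equals its trace since it is positive semidefinite. -/
noncomputable def micMatrix {d : ℕ} {X : Type*} [Fintype X]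
    (M : X → Matrix (Fin d) (Fin d) ℂ) : Matrix (Fin d × Fin d) (Fin d × Fin d) ℂ :=
  fun p q => ∑ x, _root_.vec (M x) p * star (_root_.vec (M x) q) / (M x).trace

/-! Diagonalising an effect `0 ≤ A ≤ 1` gives `Tr[A²]/Tr[A] = Σ λᵢ²/Σ λᵢ` with eigenvalues
`λᵢ ∈ [0, 1]`, which is at most `1` and at most `Σ λᵢ = Tr A`. For a POVM each `M_x ≤ Σ_y M_y = 1`,
so summing over outcomes bounds `Σ_x Tr[M_x²]/Tr[M_x]` both by the number of outcomes and by
`Σ_x Tr M_x = Tr 1 = d`. -/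

open scoped MatrixOrder

lemma Finset.sum_sq_div_sum_le_min {ι : Type*} (s : Finset ι) (f : ι → ℝ)
    (h0 : ∀ i ∈ s, 0 ≤ f i) (h1 : ∀ i ∈ s, f i ≤ 1) :
    (∑ i ∈ s, f i ^ 2) / ∑ i ∈ s, f i ≤ min 1 (∑ i ∈ s, f i) := by
  have hsum : 0 ≤ ∑ i ∈ s, f i := Finset.sum_nonneg h0
  refine le_min (div_le_one_of_le₀ ?_ hsum) (div_le_of_le_mul₀ hsum hsum ?_)
  · exact Finset.sum_le_sum fun i hi => pow_le_of_le_one (h0 i hi) (h1 i hi) two_ne_zero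
  · rw [← sq]; exact Finset.sum_sq_le_sq_sum_of_nonneg h0

namespace Matrix

variable {n 𝕜 : Type*} [Fintype n] [DecidableEq n] [RCLike 𝕜] {A : Matrix n n 𝕜}

lemma IsHermitian.trace_mul_self_eq_sum_eigenvalues_sq (hA : A.IsHermitian) :
    (A * A).trace = ∑ i, (hA.eigenvalues i : 𝕜) ^ 2 := by
  conv_lhs => rw [hA.spectral_theorem, ← map_mul, Unitary.conjStarAlgAut_apply, trace_mul_cycle,
    Unitary.coe_star_mul_self, one_mul, diagonal_mul_diagonal, trace_diagonal]
  simp [sq]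

lemma IsHermitian.eigenvalues_le_one (hA : A.IsHermitian) (h : A ≤ 1) (i : n) :
    hA.eigenvalues i ≤ 1 :=
  (CFC.le_one_iff A hA.isSelfAdjoint).mp h _ (hA.spectrum_real_eq_range_eigenvalues ▸ ⟨i, rfl⟩)

lemma PosSemidef.re_trace_mul_self_div_le_min (hA : A.PosSemidef) (h : A ≤ 1) :
    RCLike.re (A * A).trace / RCLike.re A.trace ≤ min 1 (RCLike.re A.trace) := by
  rw [hA.1.trace_mul_self_eq_sum_eigenvalues_sq, hA.1.trace_eq_sum_eigenvalues]
  simp only [map_sum, ← RCLike.ofReal_pow, RCLike.ofReal_re]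
  exact Finset.sum_sq_div_sum_le_min _ _ (fun i _ => hA.eigenvalues_nonneg i)
    (fun i _ => hA.1.eigenvalues_le_one h i)

end Matrix

lemma trace_micMatrix {d : ℕ} {X : Type*} [Fintype X] (M : X → Matrix (Fin d) (Fin d) ℂ)
    (hM : ∀ x, (M x).IsHermitian) :
    (micMatrix M).trace = ∑ x, (M x * M x).trace / (M x).trace := by
  have hvec : ∀ x, ∑ p, _root_.vec (M x) p * star (_root_.vec (M x) p) = (M x * M x).trace :=
    fun x => calc
      _ = (M x).vec ⬝ᵥ star (M x).vec := rfl
      _ = ((M x)ᴴ * M x).trace := by rw [dotProduct_comm, star_vec_dotProduct_vec]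
      _ = (M x * M x).trace := by rw [(hM x).eq]
  rw [trace]
  simp only [diag_apply, micMatrix]
  rw [Finset.sum_comm]
  simp only [← Finset.sum_div, hvec]

theorem mic_traceNorm_le_min_outcomes_dim {d k : ℕ} {X : Type*} [Fintype X]
    (M : X → Matrix (Fin d) (Fin d) ℂ)
    (hpsd : ∀ x, (M x).PosSemidef) (hsum : ∑ x, M x = 1)
    (hk : Fintype.card X ≤ k) :
    (micMatrix M).trace = ∑ x, (M x * M x).trace / (M x).trace ∧
    ∑ x, ((M x * M x).trace.re / (M x).trace.re) ≤ min k d := by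
  refine ⟨trace_micMatrix M fun x => (hpsd x).isHermitian, ?_⟩
  have hle_one : ∀ x, M x ≤ 1 := fun x =>
    hsum ▸ Finset.single_le_sum (fun y _ => (hpsd y).nonneg) (Finset.mem_univ x)
  have hsum_trace : ∑ x, (M x).trace.re = d := by
    rw [← Complex.re_sum, ← trace_sum, hsum, trace_one]; simp
  calc ∑ x, (M x * M x).trace.re / (M x).trace.re
      ≤ ∑ x, min 1 (M x).trace.re :=
        Finset.sum_le_sum fun x _ => (hpsd x).re_trace_mul_self_div_le_min (hle_one x)
    _ ≤ min k d := by
        rw [Nat.cast_min]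
        refine le_min ?_ ?_
        · calc ∑ x, min 1 (M x).trace.re ≤ ∑ _x : X, (1 : ℝ) :=
                Finset.sum_le_sum fun x _ => min_le_left _ _
            _ ≤ k := by simpa using hk
        · exact hsum_trace ▸ Finset.sum_le_sum fun x _ => min_le_right _ _
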